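/- arXiv:1910.06930 — 2 statements merged into one kernel-verified Lean document; each statement's English description precedes it below -/
import Mathlib

section
/- Let ε ∈ {1, −1} and let λ₁, λ₂ be real numbers with λ₁·λ₂ = −ε. Then for every real s such that C_ε(s) − λ₁·S_ε(s) ≠ 0 and C_ε(s) − λ₂·S_ε(s) ≠ 0, one has ((ε·S_ε(s) + λ₁·C_ε(s))/(C_ε(s) − λ₁·S_ε(s))) · ((ε·S_ε(s) + λ₂·C_ε(s))/(C_ε(s) − λ₂·S_ε(s))) = −ε. -/
/-- `C_ε(s) = cos s` if `ε = 1`, `cosh s` if `ε = -1`. -/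
noncomputable def Ceps (ε s : ℝ) : ℝ := if ε = 1 then Real.cos s else Real.cosh s

/-- `S_ε(s) = sin s` if `ε = 1`, `sinh s` if `ε = -1`. -/
noncomputable def Seps (ε s : ℝ) : ℝ := if ε = 1 then Real.sin s else Real.sinh s

/-! Clearing denominators, the claim reduces to the factorization
`(εS + λ₁C)(εS + λ₂C) + ε(C - λ₁S)(C - λ₂S) = (C² + εS²)(λ₁λ₂ + ε)`,
whose right side vanishes when `λ₁λ₂ = -ε`. -/

theorem add_mul_add_add_mul_sub_mul_sub {R : Type*} [CommRing R] (ε l₁ l₂ C S : R) :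
    (ε * S + l₁ * C) * (ε * S + l₂ * C) + ε * ((C - l₁ * S) * (C - l₂ * S)) =
      (C ^ 2 + ε * S ^ 2) * (l₁ * l₂ + ε) := by
  ring

theorem add_mul_add_eq_neg_mul_sub_mul_sub {R : Type*} [CommRing R] {ε l₁ l₂ : R}
    (hc : l₁ * l₂ = -ε) (C S : R) :
    (ε * S + l₁ * C) * (ε * S + l₂ * C) = -ε * ((C - l₁ * S) * (C - l₂ * S)) := by
  have h := add_mul_add_add_mul_sub_mul_sub ε l₁ l₂ C S
  rw [hc, neg_add_cancel, mul_zero] at h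
  rw [neg_mul, eq_neg_iff_add_eq_zero, h]

theorem parallel_curvatures_product_general (ε : ℝ)
    (l₁ l₂ : ℝ) (hc : l₁ * l₂ = -ε) (s : ℝ)
    (h₁ : Ceps ε s - l₁ * Seps ε s ≠ 0)
    (h₂ : Ceps ε s - l₂ * Seps ε s ≠ 0) :
    ((ε * Seps ε s + l₁ * Ceps ε s) / (Ceps ε s - l₁ * Seps ε s)) *
      ((ε * Seps ε s + l₂ * Ceps ε s) / (Ceps ε s - l₂ * Seps ε s)) = -ε := by
  rw [div_mul_div_comm, div_eq_iff (mul_ne_zero h₁ h₂)]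
  exact add_mul_add_eq_neg_mul_sub_mul_sub hc _ _

/-- If `l₁ l₂ = -ε`, the parallel principal curvatures also satisfy
`l₁^s l₂^s = -ε`. -/
theorem parallel_curvatures_product (ε : ℝ) (hε : ε = 1 ∨ ε = -1)
    (l₁ l₂ : ℝ) (hc : l₁ * l₂ = -ε) (s : ℝ)
    (h₁ : Ceps ε s - l₁ * Seps ε s ≠ 0)
    (h₂ : Ceps ε s - l₂ * Seps ε s ≠ 0) :
    ((ε * Seps ε s + l₁ * Ceps ε s) / (Ceps ε s - l₁ * Seps ε s)) *
      ((ε * Seps ε s + l₂ * Ceps ε s) / (Ceps ε s - l₂ * Seps ε s)) = -ε :=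
  parallel_curvatures_product_general ε l₁ l₂ hc s h₁ h₂
end

section
/- Let ε ∈ {1, −1}, let p, q ≥ 1 be integers with n := p + q + 1 > 3, and let λ₁, λ₂ be real numbers. Then there is no open interval I containing 0 such that for all s ∈ I one has C_ε(s) − λ₁·S_ε(s) ≠ 0, C_ε(s) − λ₂·S_ε(s) ≠ 0, (p − 1)·λ₁^s(s) + (q − 1)·λ₂^s(s) = 0, and λ₁^s(s)·λ₂^s(s) = −ε·(n − 2), where λᵢ^s(s) = (ε·S_ε(s) + λᵢ·C_ε(s))/(C_ε(s) − λᵢ·S_ε(s)). -/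
/-- The parallel principal-curvature function. -/
noncomputable def parallelCurv (ε l s : ℝ) : ℝ :=
  (ε * Seps ε s + l * Ceps ε s) / (Ceps ε s - l * Seps ε s)

lemma Ceps_zero (ε : ℝ) : Ceps ε 0 = 1 := by
  unfold Ceps; split <;> simp

lemma Seps_zero (ε : ℝ) : Seps ε 0 = 0 := by
  unfold Seps; split <;> simp

lemma parallelCurv_zero (ε l : ℝ) : parallelCurv ε l 0 = l := by
  simp [parallelCurv, Ceps_zero, Seps_zero]

lemma Ceps_one (s : ℝ) : Ceps 1 s = Real.cos s := by simp [Ceps]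

lemma Seps_one (s : ℝ) : Seps 1 s = Real.sin s := by simp [Seps]

/-- The system (26)-(27) of the paper has no solution on any open interval
around `0` when `n = p + q + 1 > 3`. -/
theorem no_solution_system (ε : ℝ) (hε : ε = 1 ∨ ε = -1)
    (p q : ℤ) (hp : 1 ≤ p) (hq : 1 ≤ q) (n : ℤ) (hn : n = p + q + 1)
    (hn3 : 3 < n) (l₁ l₂ : ℝ) :
    ¬ ∃ a b : ℝ, a < 0 ∧ 0 < b ∧ ∀ s ∈ Set.Ioo a b,
      Ceps ε s - l₁ * Seps ε s ≠ 0 ∧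
      Ceps ε s - l₂ * Seps ε s ≠ 0 ∧
      ((p : ℝ) - 1) * parallelCurv ε l₁ s + ((q : ℝ) - 1) * parallelCurv ε l₂ s = 0 ∧
      parallelCurv ε l₁ s * parallelCurv ε l₂ s = -ε * ((n : ℝ) - 2) := by
  rintro ⟨a, b, ha, hb, H⟩
  have h0 : (0:ℝ) ∈ Set.Ioo a b := ⟨ha, hb⟩
  obtain ⟨hd1₀, hd2₀, he1₀, he2₀⟩ := H 0 h0
  rw [parallelCurv_zero, parallelCurv_zero] at he1₀ he2₀
  have hn4 : (4:ℤ) ≤ n := by omega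
  have hnR : (2:ℝ) ≤ (n:ℝ) - 2 := by
    have : ((4:ℤ):ℝ) ≤ (n:ℝ) := by exact_mod_cast hn4
    push_cast at this; linarith
  have hεne : -ε * ((n:ℝ) - 2) ≠ 0 := by
    rcases hε with h | h <;> subst h <;> nlinarith
  -- Case p = 1
  rcases eq_or_lt_of_le hp with hp1 | hp2
  · have : l₂ = 0 := by
      have hq2 : (2:ℤ) ≤ q := by omega
      have hqR : (1:ℝ) ≤ (q:ℝ) - 1 := by
        have : ((2:ℤ):ℝ) ≤ (q:ℝ) := by exact_mod_cast hq2
        push_cast at this; linarith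
      have hpR : ((p:ℝ)) = 1 := by exact_mod_cast hp1.symm
      rw [hpR] at he1₀
      have : ((q:ℝ) - 1) * l₂ = 0 := by linarith
      rcases mul_eq_zero.mp this with h | h
      · linarith
      · exact h
    apply hεne
    rw [← he2₀, this, mul_zero]
  -- Case q = 1
  rcases eq_or_lt_of_le hq with hq1 | hq2
  · have : l₁ = 0 := by
      have hp2' : (2:ℤ) ≤ p := by omega
      have hpR : (1:ℝ) ≤ (p:ℝ) - 1 := by
        have : ((2:ℤ):ℝ) ≤ (p:ℝ) := by exact_mod_cast hp2'
        push_cast at this; linarith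
      have hqR : ((q:ℝ)) = 1 := by exact_mod_cast hq1.symm
      rw [hqR] at he1₀
      have : ((p:ℝ) - 1) * l₁ = 0 := by linarith
      rcases mul_eq_zero.mp this with h | h
      · linarith
      · exact h
    apply hεne
    rw [← he2₀, this, zero_mul]
  -- Now p ≥ 2 and q ≥ 2
  have hpR : (1:ℝ) ≤ (p:ℝ) - 1 := by
    have : ((2:ℤ):ℝ) ≤ (p:ℝ) := by exact_mod_cast hp2
    push_cast at this; linarith
  have hqR : (1:ℝ) ≤ (q:ℝ) - 1 := by
    have : ((2:ℤ):ℝ) ≤ (q:ℝ) := by exact_mod_cast hq2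
    push_cast at this; linarith
  rcases hε with hE | hE
  · -- ε = 1 : hard case, need two points
    subst hE
    -- key : for all s in the interval, (parallelCurv 1 l₂ s)^2 = l₂^2
    have hK₀ : ((q:ℝ) - 1) * l₂^2 = ((p:ℝ) - 1) * ((n:ℝ) - 2) := by
      linear_combination l₂ * he1₀ - ((p:ℝ) - 1) * he2₀
    have key : ∀ s ∈ Set.Ioo a b, Real.sin s ≠ 0 →
        (1 - l₂^2) * Real.sin s + 2 * l₂ * Real.cos s = 0 := by
      intro s hs hsin
      obtain ⟨hd1, hd2, he1, he2⟩ := H s hs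
      set f₁ := parallelCurv 1 l₁ s with hf₁
      set f₂ := parallelCurv 1 l₂ s with hf₂
      have hK : ((q:ℝ) - 1) * f₂^2 = ((p:ℝ) - 1) * ((n:ℝ) - 2) := by
        linear_combination f₂ * he1 - ((p:ℝ) - 1) * he2
      have hf2sq : f₂^2 = l₂^2 := by
        have h := hK.trans hK₀.symm
        have hq0 : ((q:ℝ) - 1) ≠ 0 := by linarith
        field_simp at h
        nlinarith [h]
      rw [Ceps_one, Seps_one] at hd2
      have hm : f₂ * (Real.cos s - l₂ * Real.sin s) =
          Real.sin s + l₂ * Real.cos s := by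
        rw [hf₂, parallelCurv, Ceps_one, Seps_one]
        rw [one_mul]
        exact div_mul_cancel₀ _ hd2
      have hsq : (Real.sin s + l₂ * Real.cos s)^2 =
          l₂^2 * (Real.cos s - l₂ * Real.sin s)^2 := by
        rw [← hm]
        rw [mul_pow, hf2sq]
      have hfac : Real.sin s * ((1 + l₂^2) *
          ((1 - l₂^2) * Real.sin s + 2 * l₂ * Real.cos s)) = 0 := by
        have hpyth := Real.sin_sq_add_cos_sq s
        nlinarith [hsq, hpyth]
      rcases mul_eq_zero.mp hfac with h | h
      · exact absurd h hsin
      · rcases mul_eq_zero.mp h with h' | h'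
        · nlinarith [sq_nonneg l₂]
        · exact h'
    -- pick two points
    obtain ⟨s₁, hs₁pos, hs₁b, hs₁π⟩ :
        ∃ s₁ : ℝ, 0 < s₁ ∧ s₁ < b ∧ s₁ < Real.pi := by
      have hπ := Real.pi_pos
      have hmin : 0 < min b Real.pi := lt_min hb hπ
      refine ⟨min b Real.pi / 2, by positivity, ?_, ?_⟩
      · have : min b Real.pi ≤ b := min_le_left _ _
        linarith
      · have : min b Real.pi ≤ Real.pi := min_le_right _ _
        linarith
    obtain ⟨s₂, hs₂def⟩ : ∃ s₂ : ℝ, s₂ = s₁ / 2 := ⟨_, rfl⟩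
    have hs₂pos : 0 < s₂ := by rw [hs₂def]; linarith
    have hs₂lt : s₂ < s₁ := by rw [hs₂def]; linarith
    have hmem₁ : s₁ ∈ Set.Ioo a b := ⟨by linarith, hs₁b⟩
    have hmem₂ : s₂ ∈ Set.Ioo a b := ⟨by linarith, by linarith⟩
    have hsin₁ : 0 < Real.sin s₁ := Real.sin_pos_of_pos_of_lt_pi hs₁pos hs₁π
    have hsin₂ : 0 < Real.sin s₂ := Real.sin_pos_of_pos_of_lt_pi hs₂pos (by linarith)
    have g₁ := key s₁ hmem₁ (ne_of_gt hsin₁)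
    have g₂ := key s₂ hmem₂ (ne_of_gt hsin₂)
    have hsub : Real.sin (s₁ - s₂) = Real.sin s₁ * Real.cos s₂ -
        Real.cos s₁ * Real.sin s₂ := Real.sin_sub s₁ s₂
    have hdiff : s₁ - s₂ = s₂ := by rw [hs₂def]; ring
    rw [hdiff] at hsub
    have hA : (1 - l₂^2) * Real.sin s₂ = 0 := by
      linear_combination Real.cos s₂ * g₁ - Real.cos s₁ * g₂ + (1 - l₂^2) * hsub
    have hB : 2 * l₂ * Real.sin s₂ = 0 := by
      linear_combination Real.sin s₁ * g₂ - Real.sin s₂ * g₁ + 2 * l₂ * hsub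
    have hA' : 1 - l₂^2 = 0 := by
      rcases mul_eq_zero.mp hA with h | h
      · exact h
      · exact absurd h (ne_of_gt hsin₂)
    have hB' : l₂ = 0 := by
      rcases mul_eq_zero.mp hB with h | h
      · rcases mul_eq_zero.mp h with h' | h'
        · norm_num at h'
        · exact h'
      · exact absurd h (ne_of_gt hsin₂)
    rw [hB'] at hA'
    norm_num at hA'
  · -- ε = -1 : sign contradiction at s = 0
    subst hE
    -- he1₀ : (p-1) l₁ + (q-1) l₂ = 0, he2₀ : l₁ l₂ = (n-2)
    have h' : ((q:ℝ) - 1) * l₂^2 + ((p:ℝ) - 1) * ((n:ℝ) - 2) = 0 := by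
      linear_combination l₂ * he1₀ - ((p:ℝ) - 1) * he2₀
    nlinarith [sq_nonneg l₂]
end
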